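/- arXiv:1002.1900 — 3 statements merged into one kernel-verified Lean document; each statement's English description precedes it below -/
import Mathlib

section
/- Let λ be a nonzero complex number with |λ| > 1 and λ² real, let a, d ∈ ℂ with a ≠ 0, and set t_n = λ^n a + λ^{-n} d. If Im(t_n²) = 0 for all sufficiently large n, then a², ad, and d² are all real. -/
/-- If `|λ| > 1`, `λ²` is real, `a ≠ 0`, and `tₙ² = (λⁿ a + λ⁻ⁿ d)²` is real for
all sufficiently large `n`, then `a²`, `ad` and `d²` are all real. -/
theorem real_trace_squares (l a d : ℂ) (hl : 1 < ‖l‖)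
    (hl2 : (l ^ 2).im = 0) (ha : a ≠ 0)
    (htn : ∃ n₀ : ℕ, ∀ n ≥ n₀, ((l ^ n * a + l⁻¹ ^ n * d) ^ 2).im = 0) :
    (a ^ 2).im = 0 ∧ (a * d).im = 0 ∧ (d ^ 2).im = 0 := by
  obtain ⟨n₀, hn₀⟩ := htn
  have hl0 : l ≠ 0 := by
    intro h; rw [h] at hl; simp at hl; linarith
  set r : ℝ := (l ^ 2).re with hr
  have hlr : l ^ 2 = (r : ℂ) := by
    apply Complex.ext <;> simp [hl2, hr]
  have hrabs : 1 < |r| := by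
    have : ‖l ^ 2‖ = |r| := by rw [hlr]; simp
    rw [norm_pow] at this
    nlinarith
  have hr0 : r ≠ 0 := by intro h; rw [h] at hrabs; simp at hrabs; linarith
  set x := (a ^ 2).im
  set y := (a * d).im
  set z := (d ^ 2).im
  -- key identity
  have key : ∀ n ≥ n₀, x * (r ^ n) ^ 2 + 2 * y * r ^ n + z = 0 := by
    intro n hn
    have h := hn₀ n hn
    have hexp : (l ^ n * a + l⁻¹ ^ n * d) ^ 2
        = ((r : ℂ)) ^ n * a ^ 2 + 2 * (a * d) + (((r : ℂ)) ^ n)⁻¹ * d ^ 2 := by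
      have h1 : (l ^ n) ^ 2 = (r : ℂ) ^ n := by
        rw [← hlr, ← pow_mul, ← pow_mul, Nat.mul_comm]
      have h2 : (l⁻¹ ^ n) ^ 2 = ((r : ℂ) ^ n)⁻¹ := by
        rw [← h1, ← inv_pow, ← inv_pow, inv_pow]
      have h3 : l ^ n * l⁻¹ ^ n = 1 := by
        rw [← mul_pow, mul_inv_cancel₀ hl0, one_pow]
      calc (l ^ n * a + l⁻¹ ^ n * d) ^ 2
          = (l ^ n) ^ 2 * a ^ 2 + 2 * (l ^ n * l⁻¹ ^ n) * (a * d)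
            + (l⁻¹ ^ n) ^ 2 * d ^ 2 := by ring
        _ = (r : ℂ) ^ n * a ^ 2 + 2 * (a * d) + ((r : ℂ) ^ n)⁻¹ * d ^ 2 := by
            rw [h1, h2, h3]; ring
    rw [hexp] at h
    have hc1 : ((r : ℂ)) ^ n = ((r ^ n : ℝ) : ℂ) := by push_cast; ring
    have hc2 : (((r : ℂ)) ^ n)⁻¹ = (((r ^ n)⁻¹ : ℝ) : ℂ) := by
      rw [hc1]; push_cast; ring
    rw [hc2, hc1] at h
    simp only [Complex.add_im, Complex.mul_im, Complex.ofReal_re, Complex.ofReal_im,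
      Complex.re_ofNat, Complex.im_ofNat, zero_mul, mul_zero, add_zero] at h
    have hrn : r ^ n ≠ 0 := pow_ne_zero _ hr0
    have h' : r ^ n * x + 2 * y + (r ^ n)⁻¹ * z = 0 := by
      linarith [Complex.mul_im a d]
    have := mul_eq_zero_of_right (r ^ n) h'
    field_simp at this
    linarith [this]
  -- three equations
  set s : ℝ := r ^ n₀ with hs
  have hs0 : s ≠ 0 := pow_ne_zero _ hr0
  have F0 : x * s ^ 2 + 2 * y * s + z = 0 := key n₀ le_rfl
  have F1 : x * (s * r) ^ 2 + 2 * y * (s * r) + z = 0 := by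
    have := key (n₀ + 1) (by omega)
    rw [pow_succ] at this; exact this
  have F2 : x * (s * r ^ 2) ^ 2 + 2 * y * (s * r ^ 2) + z = 0 := by
    have := key (n₀ + 2) (by omega)
    rw [pow_succ, pow_succ] at this
    convert this using 2 <;> ring
  have hr1 : r - 1 ≠ 0 := by
    intro h; have : r = 1 := by linarith
    rw [this] at hrabs; simp at hrabs
  have hr2 : r ^ 2 - 1 ≠ 0 := by
    have : 1 < r ^ 2 := by nlinarith [abs_nonneg r, sq_abs r]
    intro h; nlinarith
  have hne : s ^ 2 * (r ^ 2 - 1) * r * (r - 1) ≠ 0 :=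
    mul_ne_zero (mul_ne_zero (mul_ne_zero (pow_ne_zero _ hs0) hr2) hr0) hr1
  have hx : x = 0 := by
    have h : x * (s ^ 2 * (r ^ 2 - 1) * r * (r - 1)) = 0 := by
      linear_combination F2 - (1 + r) * F1 + r * F0
    exact (mul_eq_zero.mp h).resolve_right hne
  have hy : y = 0 := by
    have h : y * (2 * s * (r - 1)) = 0 := by
      linear_combination F1 - F0 - s ^ 2 * (r ^ 2 - 1) * hx
    have hne2 : 2 * s * (r - 1) ≠ 0 :=
      mul_ne_zero (mul_ne_zero two_ne_zero hs0) hr1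
    exact (mul_eq_zero.mp h).resolve_right hne2
  have hz : z = 0 := by
    linear_combination F0 - s ^ 2 * hx - 2 * s * hy
  exact ⟨hx, hy, hz⟩
end

section
/- Let V be a real vector space of dimension 2m, J : V → V with J² = -Id, and let H, L be symmetric bilinear forms with L(Jv,Jw) = -L(v,w). If the form G = H + L is positive definite on V, then H is positive definite on a subspace of dimension at least m. -/
/-- If `G = H + L` is positive definite on a `2m`-dimensional real space where `L` is
anti-invariant under a complex structure `J`, then `H` is positive definite on a
subspace of dimension at least `m`. -/
theorem pos_def_sum_J_anti_invariant
    (V : Type*) [AddCommGroup V] [Module ℝ V] [FiniteDimensional ℝ V]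
    (m : ℕ) (hdim : Module.finrank ℝ V = 2 * m)
    (H L : LinearMap.BilinForm ℝ V)
    (hHsymm : ∀ v w : V, H v w = H w v)
    (hLsymm : ∀ v w : V, L v w = L w v)
    (J : V →ₗ[ℝ] V) (hJ : ∀ v : V, J (J v) = -v)
    (hLJ : ∀ v w : V, L (J v) (J w) = -L v w)
    (hGpos : ∀ v : V, v ≠ 0 → 0 < H v v + L v v) :
    ∃ W : Submodule ℝ V, m ≤ Module.finrank ℝ W ∧ ∀ w ∈ W, w ≠ 0 → 0 < H w w := by
  classical
  -- the set of dimensions of subspaces on which H is positive definite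
  set S : Set ℕ := {n | ∃ P : Submodule ℝ V,
    (∀ w ∈ P, w ≠ 0 → 0 < H w w) ∧ Module.finrank ℝ P = n} with hS
  have hS0 : (0 : ℕ) ∈ S := ⟨⊥, by simp, by simp⟩
  have hSbdd : BddAbove S := by
    refine ⟨Module.finrank ℝ V, ?_⟩
    rintro n ⟨P, -, rfl⟩
    exact Submodule.finrank_le P
  obtain ⟨P, hPpos, hPrank⟩ : sSup S ∈ S := Nat.sSup_mem ⟨0, hS0⟩ hSbdd
  -- if `P` has dimension ≥ m we are done; otherwise derive a contradiction
  by_cases hm : m ≤ Module.finrank ℝ P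
  · exact ⟨P, hm, hPpos⟩
  exfalso
  push_neg at hm
  have hHrefl : H.IsRefl := fun v w h => by rw [hHsymm]; exact h
  set N : Submodule ℝ V := H.orthogonal P with hN
  -- H is negative semidefinite on N
  have hNneg : ∀ v ∈ N, H v v ≤ 0 := by
    intro v hv
    by_contra hpos
    push_neg at hpos
    have hvP : v ∉ P := by
      intro hvP
      have : H v v = 0 := hHrefl v v (hv v hvP)
      linarith
    have hlt : P < P ⊔ (ℝ ∙ v) := by
      refine lt_of_le_of_ne le_sup_left ?_
      intro h
      exact hvP (h ▸ Submodule.mem_sup_right (Submodule.mem_span_singleton_self v))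
    have hpos' : ∀ w ∈ P ⊔ (ℝ ∙ v), w ≠ 0 → 0 < H w w := by
      intro w hw hw0
      obtain ⟨p, hp, q, hq, rfl⟩ := Submodule.mem_sup.mp hw
      obtain ⟨t, rfl⟩ := Submodule.mem_span_singleton.mp hq
      have hpv : H p v = 0 := hv p hp
      have hvp : H v p = 0 := by rw [hHsymm]; exact hpv
      have hexp : H (p + t • v) (p + t • v) = H p p + t * t * H v v := by
        simp [map_add, LinearMap.add_apply, LinearMap.smul_apply, map_smul, hpv, hvp,
          smul_eq_mul]
        ring
      rw [hexp]
      rcases eq_or_ne p 0 with rfl | hp0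
      · have ht : t ≠ 0 := by
          rintro rfl
          simp at hw0
        have htt : 0 < t * t := mul_self_pos.mpr ht
        have h00 : H (0 : V) 0 = 0 := by simp
        nlinarith
      · have h1 : 0 < H p p := hPpos p hp hp0
        nlinarith [mul_self_nonneg t]
    have : Module.finrank ℝ (P ⊔ (ℝ ∙ v) : Submodule ℝ V) ∈ S :=
      ⟨P ⊔ (ℝ ∙ v), hpos', rfl⟩
    have hle := le_csSup hSbdd this
    have := Submodule.finrank_lt_finrank_of_lt hlt
    omega
  -- dimension of N is at least m + 1
  have hNrank : m + 1 ≤ Module.finrank ℝ N := by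
    have h1 := LinearMap.BilinForm.finrank_add_finrank_orthogonal hHrefl (B := H) P
    rw [← hN] at h1
    omega
  -- J as a linear equivalence
  have hJinv : ∀ v : V, J (-(J v)) = v := fun v => by rw [map_neg, hJ, neg_neg]
  let e : V ≃ₗ[ℝ] V := LinearEquiv.ofLinear J (-J)
    (by ext v; simpa using hJinv v) (by ext v; simpa using hJinv v)
  set JN : Submodule ℝ V := N.map (e : V →ₗ[ℝ] V) with hJN
  have hJNrank : Module.finrank ℝ JN = Module.finrank ℝ N :=
    LinearEquiv.finrank_map_eq e N
  -- N ∩ JN is nontrivial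
  have hinf : 0 < Module.finrank ℝ (N ⊓ JN : Submodule ℝ V) := by
    have h1 := Submodule.finrank_sup_add_finrank_inf_eq N JN
    have h2 : Module.finrank ℝ (N ⊔ JN : Submodule ℝ V) ≤ Module.finrank ℝ V :=
      Submodule.finrank_le _
    omega
  have hne : (N ⊓ JN : Submodule ℝ V) ≠ ⊥ := by
    intro h
    rw [h, finrank_bot] at hinf
    exact lt_irrefl 0 hinf
  obtain ⟨v, hvmem, hv0⟩ := Submodule.exists_mem_ne_zero_of_ne_bot hne
  obtain ⟨hvN, hvJN⟩ := Submodule.mem_inf.mp hvmem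
  obtain ⟨w, hwN, hwv⟩ := Submodule.mem_map.mp hvJN
  have hwv' : J w = v := hwv
  have hw0 : w ≠ 0 := by rintro rfl; simp [← hwv'] at hv0
  have hJv : J v = -w := by rw [← hwv', hJ]
  have hJv0 : J v ≠ 0 := by rw [hJv]; simpa using hw0
  have h1 : H v v ≤ 0 := hNneg v hvN
  have h2 : H (J v) (J v) ≤ 0 := by
    rw [hJv]
    simpa using hNneg w hwN
  have h3 := hGpos v hv0
  have h4 := hGpos (J v) hJv0
  have h5 : L (J v) (J v) = -L v v := hLJ v v
  linarith
end

section
/- Let a, b, r, s be nonzero real numbers with a ≠ b and r ≠ s, let λ ∈ ℝ with |λ| > 1, and let e^{iθ} ∈ ℂ with Im(e^{iθ}) ≠ 0. Set a_n = λ^{-2n} a, b_n = λ^{-2n} b, z = r e^{iθ}, w = s e^{iθ}. Then the cross ratio (a_n, z; b_n, w) = (a_n - b_n)(z - w)/((a_n - w)(z - b_n)) cannot be real for all sufficiently large n; indeed λ^{2n}·Im((a_n, z; b_n, w)) → ((a-b)(r-s)/(-rs))·Im(e^{-iθ}) ≠ 0. -/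
open Filter

theorem cross_ratio_aux (a b r s l θ : ℝ)
    (ha : a ≠ 0) (hb : b ≠ 0) (hr : r ≠ 0) (hs : s ≠ 0)
    (hab : a ≠ b) (hrs : r ≠ s) (hl : 1 < |l|)
    (hθ : (Complex.exp ((θ : ℂ) * Complex.I)).im ≠ 0)
    (z w : ℂ) (an bn cr : ℕ → ℂ)
    (hzd : z = (r : ℂ) * Complex.exp ((θ : ℂ) * Complex.I))
    (hwd : w = (s : ℂ) * Complex.exp ((θ : ℂ) * Complex.I))
    (hand : an = fun n => ((a / l ^ (2 * n) : ℝ) : ℂ))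
    (hbnd : bn = fun n => ((b / l ^ (2 * n) : ℝ) : ℂ))
    (hcrd : cr = fun n => ((an n - bn n) * (z - w)) / ((an n - w) * (z - bn n))) :
    Tendsto (fun n => l ^ (2 * n) * (cr n).im) atTop
        (nhds (((a - b) * (r - s) / (-(r * s))) * (Complex.exp (-(θ : ℂ) * Complex.I)).im)) ∧
      ((a - b) * (r - s) / (-(r * s))) * (Complex.exp (-(θ : ℂ) * Complex.I)).im ≠ 0 ∧
      ¬ ∀ᶠ n in atTop, (cr n).im = 0 := by
  have he0 : Complex.exp ((θ : ℂ) * Complex.I) ≠ 0 := Complex.exp_ne_zero _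
  have hl0 : l ≠ 0 := by
    intro h; rw [h, abs_zero] at hl; linarith
  have hsin : Real.sin θ ≠ 0 := by
    simpa [Complex.exp_ofReal_mul_I_im] using hθ
  have hw : w ≠ 0 := hwd ▸ mul_ne_zero (by exact_mod_cast hs) he0
  have hz : z ≠ 0 := hzd ▸ mul_ne_zero (by exact_mod_cast hr) he0
  set L : ℝ := ((a - b) * (r - s) / (-(r * s))) * (Complex.exp (-(θ : ℂ) * Complex.I)).im with hL
  set g : ℝ → ℂ := fun ε => (((a : ℂ) - b) * (z - w)) / (((ε : ℂ) * a - w) * (z - (ε : ℂ) * b))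
    with hg
  have hd0 : (((0 : ℝ) : ℂ) * a - w) * (z - ((0 : ℝ) : ℂ) * b) ≠ 0 := by
    simp only [Complex.ofReal_zero, zero_mul, zero_sub, sub_zero]
    exact mul_ne_zero (neg_ne_zero.mpr hw) hz
  have hg0 : g 0 = ((((a - b) * (r - s) / (-(r * s))) : ℝ) : ℂ) *
      Complex.exp (-(θ : ℂ) * Complex.I) := by
    have hrs0 : (r : ℂ) * s ≠ 0 := by
      exact_mod_cast mul_ne_zero hr hs
    rw [hg]
    simp only [Complex.ofReal_zero, zero_mul, zero_sub, sub_zero]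
    have hexp : Complex.exp (-(θ:ℂ) * Complex.I) = (Complex.exp ((θ:ℂ) * Complex.I))⁻¹ := by
      rw [← Complex.exp_neg]; ring_nf
    rw [hexp, hzd, hwd]
    field_simp [he0, Complex.ofReal_ne_zero.mpr hr, Complex.ofReal_ne_zero.mpr hs]
    push_cast
    field_simp [Complex.ofReal_ne_zero.mpr hr, Complex.ofReal_ne_zero.mpr hs]
  have hkey : ∀ n, l ^ (2 * n) * (cr n).im = (g (1 / l ^ (2 * n))).im := by
    intro n
    have hpow : (l : ℝ) ^ (2 * n) ≠ 0 := pow_ne_zero _ hl0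
    have hcr : cr n = ((1 / l ^ (2 * n) : ℝ) : ℂ) * g (1 / l ^ (2 * n)) := by
      simp only [hcrd, hand, hbnd, hg]
      rw [mul_div_assoc']
      congr 1
      · push_cast
        field_simp
      · congr 1 <;> push_cast <;> field_simp
    rw [hcr, Complex.im_ofReal_mul]
    field_simp
  have hεn : Tendsto (fun n => (1 / l ^ (2 * n) : ℝ)) atTop (nhds 0) := by
    have h2 : |(l ^ 2)⁻¹| < 1 := by
      rw [abs_inv, inv_lt_one_iff₀]
      right
      calc (1:ℝ) < |l| := hl
        _ ≤ |l ^ 2| := by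
          rw [abs_pow]
          nlinarith [abs_nonneg l]
    have := tendsto_pow_atTop_nhds_zero_of_abs_lt_one h2
    convert this using 2 with n
    rw [pow_mul, one_div, inv_pow]
  have hcont : Tendsto g (nhds 0) (nhds (g 0)) := by
    apply ContinuousAt.tendsto
    apply ContinuousAt.div
    · fun_prop
    · fun_prop
    · exact hd0
  have hmain : Tendsto (fun n => l ^ (2 * n) * (cr n).im) atTop (nhds L) := by
    have h1 : Tendsto (fun n => (g (1 / l ^ (2 * n))).im) atTop (nhds L) := by
      have h2 : Tendsto (fun n => g (1 / l ^ (2 * n))) atTop (nhds (g 0)) := hcont.comp hεn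
      have h3 := (Complex.continuous_im.tendsto _).comp h2
      convert h3 using 1
      · rfl
      rw [hL, hg0, Complex.im_ofReal_mul]
    exact h1.congr (fun n => (hkey n).symm)
  have hLne : L ≠ 0 := by
    rw [hL]
    apply mul_ne_zero
    · exact div_ne_zero (mul_ne_zero (sub_ne_zero.mpr hab) (sub_ne_zero.mpr hrs))
        (neg_ne_zero.mpr (mul_ne_zero hr hs))
    · have heq : (-(θ : ℂ)) * Complex.I = (((-θ : ℝ) : ℂ)) * Complex.I := by push_cast; ring
      rw [heq, Complex.exp_ofReal_mul_I_im, Real.sin_neg]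
      simpa using hsin
  refine ⟨hmain, hLne, ?_⟩
  intro h
  have h0 : Tendsto (fun n => l ^ (2 * n) * (cr n).im) atTop (nhds 0) := by
    apply Tendsto.congr' _ tendsto_const_nhds
    filter_upwards [h] with n hn
    simp [hn]
  exact hLne (tendsto_nhds_unique hmain h0)

/-- The cross ratio `(aₙ, z; bₙ, w)` with `aₙ = λ^{-2n}a`, `bₙ = λ^{-2n}b`,
`z = re^{iθ}`, `w = se^{iθ}` (with `e^{iθ}` not real) cannot be real for all large `n`:
indeed `λ^{2n}·Im((aₙ, z; bₙ, w)) → ((a-b)(r-s)/(-rs))·Im(e^{-iθ}) ≠ 0`. -/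
theorem cross_ratio_not_eventually_real (a b r s l θ : ℝ)
    (ha : a ≠ 0) (hb : b ≠ 0) (hr : r ≠ 0) (hs : s ≠ 0)
    (hab : a ≠ b) (hrs : r ≠ s) (hl : 1 < |l|)
    (hθ : (Complex.exp ((θ : ℂ) * Complex.I)).im ≠ 0) :
    letI z : ℂ := (r : ℂ) * Complex.exp ((θ : ℂ) * Complex.I)
    letI w : ℂ := (s : ℂ) * Complex.exp ((θ : ℂ) * Complex.I)
    letI an : ℕ → ℂ := fun n => ((a / l ^ (2 * n) : ℝ) : ℂ)
    letI bn : ℕ → ℂ := fun n => ((b / l ^ (2 * n) : ℝ) : ℂ)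
    letI cr : ℕ → ℂ := fun n => ((an n - bn n) * (z - w)) / ((an n - w) * (z - bn n))
    Tendsto (fun n => l ^ (2 * n) * (cr n).im) atTop
        (nhds (((a - b) * (r - s) / (-(r * s))) * (Complex.exp (-(θ : ℂ) * Complex.I)).im)) ∧
      ((a - b) * (r - s) / (-(r * s))) * (Complex.exp (-(θ : ℂ) * Complex.I)).im ≠ 0 ∧
      ¬ ∀ᶠ n in atTop, (cr n).im = 0 :=
  cross_ratio_aux a b r s l θ ha hb hr hs hab hrs hl hθ _ _ _ _ _ rfl rfl rfl rfl rfl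
end
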